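/- arXiv:2605.16856 — 4 statements merged into one kernel-verified Lean document; each statement's English description precedes it below -/
import Mathlib

section
/- Let M be a star-dependent matrix on a finite hypergraph H, and let W be a nontrivial unit. Then the subspace S_W = {x ∈ ℝ^V : ∑_{v∈W} x(v) = 0 and x(w) = 0 for all w ∉ W} is an M-invariant subspace of dimension |W| − 1, on which M acts as multiplication by the scalar M_{uu} − M_{uv} (for any distinct u,v ∈ W). -/
/-- The star of a vertex `v` in a hypergraph with edge set `E`. -/
def vertexStar {V : Type*} [DecidableEq V] (E : Finset (Finset V)) (v : V) :
    Finset (Finset V) :=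
  E.filter (fun e => v ∈ e)

/-- The subspace `S_W = {x : ∑_{v ∈ W} x v = 0, x ≡ 0 off W}`. -/
def SW {V : Type*} [Fintype V] [DecidableEq V] (W : Finset V) :
    Submodule ℝ (V → ℝ) where
  carrier := {x | ∑ v ∈ W, x v = 0 ∧ ∀ w ∉ W, x w = 0}
  add_mem' := by
    rintro a b ⟨ha1, ha2⟩ ⟨hb1, hb2⟩
    constructor
    · simp [Finset.sum_add_distrib, ha1, hb1]
    · intro w hw; simp [ha2 w hw, hb2 w hw]
  zero_mem' := by simp
  smul_mem' := by
    rintro c a ⟨ha1, ha2⟩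
    constructor
    · simp [← Finset.mul_sum, ha1]
    · intro w hw; simp [ha2 w hw]

/-- Summation functional on `W → ℝ`. -/
def sumFun {V : Type*} [Fintype V] [DecidableEq V] (W : Finset V) :
    (W → ℝ) →ₗ[ℝ] ℝ where
  toFun y := ∑ a : W, y a
  map_add' a b := by simp [Finset.sum_add_distrib]
  map_smul' c a := by simp [Finset.mul_sum]

/-- Extension-by-zero map. -/
def extZero {V : Type*} [Fintype V] [DecidableEq V] (W : Finset V) :
    (W → ℝ) →ₗ[ℝ] (V → ℝ) where
  toFun y := fun v => if h : v ∈ W then y ⟨v, h⟩ else 0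
  map_add' a b := by funext v; by_cases h : v ∈ W <;> simp [h]
  map_smul' c a := by funext v; by_cases h : v ∈ W <;> simp [h]

lemma extZero_inj {V : Type*} [Fintype V] [DecidableEq V] (W : Finset V) :
    Function.Injective (extZero W) := by
  intro a b hab
  funext ⟨x, hx⟩
  have := congrFun hab x
  simpa [extZero, hx] using this

lemma map_ker_eq_SW {V : Type*} [Fintype V] [DecidableEq V] (W : Finset V) :
    (LinearMap.ker (sumFun W)).map (extZero W) = SW W := by
  ext x
  constructor
  · rintro ⟨y, hy, rfl⟩
    constructor
    · have : ∑ v ∈ W, (extZero W) y v = ∑ a : W, y a := by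
        rw [← Finset.sum_attach W]
        refine Finset.sum_congr rfl fun a _ => ?_
        simp [extZero, a.2]
      rw [this]
      exact hy
    · intro w hw; simp [extZero, hw]
  · rintro ⟨h1, h2⟩
    refine ⟨fun a => x a, ?_, ?_⟩
    · show ∑ a : W, x a = 0
      rw [← Finset.sum_attach W (fun v => x v)] at h1
      exact h1
    · funext w
      by_cases hw : w ∈ W <;> simp [extZero, hw, h2 w]

lemma finrank_SW {V : Type*} [Fintype V] [DecidableEq V] (W : Finset V)
    (hW : W.Nonempty) : Module.finrank ℝ (SW W) = W.card - 1 := by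
  have hsurj : Function.Surjective (sumFun W) := by
    intro r
    obtain ⟨a, ha⟩ := hW
    have hc : (W.card : ℝ) ≠ 0 := by
      simp [Finset.card_eq_zero, Finset.ne_empty_of_mem ha]
    refine ⟨fun _ => r / W.card, ?_⟩
    simp [sumFun, Finset.sum_const, Finset.card_univ, Fintype.card_coe]
    field_simp
  have hker : Module.finrank ℝ (LinearMap.ker (sumFun W)) = W.card - 1 := by
    have h := LinearMap.finrank_range_add_finrank_ker (sumFun W)
    rw [LinearMap.range_eq_top.mpr hsurj, finrank_top, Module.finrank_self] at h
    have hdim : Module.finrank ℝ (W → ℝ) = W.card := by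
      simp [Module.finrank_pi, Fintype.card_coe]
    omega
  rw [← map_ker_eq_SW]
  rw [← LinearEquiv.finrank_eq
    (Submodule.equivMapOfInjective (extZero W) (extZero_inj W) (LinearMap.ker (sumFun W)))]
  exact hker

/-- For a star-dependent matrix `M` and a nontrivial unit `W`, the subspace `S_W` is
`M`-invariant, has dimension `|W| - 1`, and `M` acts on it as the scalar
`M_{uu} - M_{uv}` for any distinct `u, v ∈ W`. -/
theorem stmt6 {V : Type*} [Fintype V] [DecidableEq V]
    (E : Finset (Finset V)) (M : Matrix V V ℝ)
    (F : Finset (Finset V) → Finset (Finset V) → ℝ) (G : Finset (Finset V) → ℝ)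
    (hF : ∀ u v, u ≠ v → M u v = F (vertexStar E u) (vertexStar E v))
    (hG : ∀ u, M u u = G (vertexStar E u))
    (W : Finset V) (S : Finset (Finset V)) (hS : S ≠ ∅)
    (hunit : ∀ x : V, x ∈ W ↔ vertexStar E x = S)
    (hW : 2 ≤ W.card) (u v : V) (hu : u ∈ W) (hv : v ∈ W) (huv : u ≠ v) :
    (∀ x ∈ SW W, M.mulVec x = (M u u - M u v) • x)
      ∧ (∀ x ∈ SW W, M.mulVec x ∈ SW W)
      ∧ Module.finrank ℝ (SW W) = W.card - 1 := by
  have hstar : ∀ x ∈ W, vertexStar E x = S := fun x hx => (hunit x).1 hx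
  have hMuv : M u v = F S S := by rw [hF u v huv, hstar u hu, hstar v hv]
  have hMuu : M u u = G S := by rw [hG u, hstar u hu]
  have key : ∀ x ∈ SW W, M.mulVec x = (M u u - M u v) • x := by
    intro x hx
    obtain ⟨hsum, hzero⟩ := hx
    funext i
    simp only [Matrix.mulVec, dotProduct, Pi.smul_apply, smul_eq_mul]
    rw [← Finset.sum_subset (Finset.subset_univ W)
      (fun j _ hj => by rw [hzero j hj, mul_zero])]
    by_cases hi : i ∈ W
    · rw [← Finset.sum_erase_add W _ hi]
      have herase : ∀ j ∈ W.erase i, M i j * x j = F S S * x j := by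
        intro j hj
        rw [hF i j (Ne.symm (Finset.ne_of_mem_erase hj)), hstar i hi,
          hstar j (Finset.mem_of_mem_erase hj)]
      rw [Finset.sum_congr rfl herase, ← Finset.mul_sum]
      have hsum' : ∑ j ∈ W.erase i, x j = -x i := by
        have := Finset.sum_erase_add W x hi
        rw [hsum] at this
        linarith
      rw [hsum', hG i, hstar i hi, hMuu, hMuv]
      ring
    · have : ∀ j ∈ W, M i j * x j = F (vertexStar E i) S * x j := by
        intro j hj
        rw [hF i j (fun h => hi (h ▸ hj)), hstar j hj]
      rw [Finset.sum_congr rfl this, ← Finset.mul_sum, hsum, mul_zero,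
        hzero i hi, mul_zero]
  refine ⟨key, fun x hx => ?_, ?_⟩
  · rw [key x hx]
    exact Submodule.smul_mem _ _ hx
  · exact finrank_SW W (Finset.card_pos.mp (by omega))
end

section
/- In H(n,k,p), the expected number X_r of star-collisions of support size r (unordered pairs {u,v} with Γ(u) = Γ(v), |Γ(u)| = r) equals C(n,2) · C(C(n−2,k−2), r) · p^r · (1−p)^{2·C(n−2,k−1) + C(n−2,k−2) − r}. -/
/-!
By linearity of expectation, `𝔼 X_r` is `C(n,2)` times the probability that a fixed pair `{u, v}`
collides. The stars of `u` and `v` coincide iff every edge meeting `{u, v}` contains both, so the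
event only involves the `C(n,k) - C(n-2,k)` potential edges meeting the pair, and says that exactly
`r` of them are present, all among the `C(n-2,k-2)` edges containing the pair.
-/

/-- All `k`-element subsets of `[n]`, the possible hyperedges of a `k`-uniform
hypergraph on `n` vertices. -/
def kSets (n k : ℕ) : Finset (Finset (Fin n)) :=
  (Finset.univ : Finset (Fin n)).powersetCard k

/-- The probability, in the random hypergraph `H(n,k,p)` where each `k`-subset is a
hyperedge independently with probability `p`, of a given edge set `E`. -/
noncomputable def hweight (n k : ℕ) (p : ℝ) (E : Finset (Finset (Fin n))) : ℝ :=
  if E ⊆ kSets n k then p ^ E.card * (1 - p) ^ ((kSets n k).card - E.card) else 0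

open Classical in
/-- The probability of an event `A` under `H(n,k,p)`. -/
noncomputable def hprob (n k : ℕ) (p : ℝ) (A : Finset (Finset (Fin n)) → Prop) : ℝ :=
  ∑ E : Finset (Finset (Fin n)), if A E then hweight n k p E else 0

/-- The expectation of a random variable `f` under `H(n,k,p)`. -/
noncomputable def hexp (n k : ℕ) (p : ℝ) (f : Finset (Finset (Fin n)) → ℝ) : ℝ :=
  ∑ E : Finset (Finset (Fin n)), hweight n k p E * f E

/-- The star of a vertex `v`: the set of hyperedges of `E` containing `v`. -/
def hstar {n : ℕ} (E : Finset (Finset (Fin n))) (v : Fin n) : Finset (Finset (Fin n)) :=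
  E.filter (fun e => v ∈ e)

/-- `X_r`: the number of unordered pairs of (distinct) vertices with identical stars of
size exactly `r` (star-collisions of support size `r`). -/
def Xr (n r : ℕ) (E : Finset (Finset (Fin n))) : ℕ :=
  ((Finset.univ : Finset (Fin n)).powersetCard 2 |>.filter
    (fun P => (∀ u ∈ P, ∀ v ∈ P, hstar E u = hstar E v) ∧
      ∀ u ∈ P, (hstar E u).card = r)).card

open Finset

lemma Nat.choose_sub_choose_sub_two {n k : ℕ} (hn : 2 ≤ n) (hk : 2 ≤ k) :
    n.choose k - (n - 2).choose k = 2 * (n - 2).choose (k - 1) + (n - 2).choose (k - 2) := by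
  obtain ⟨m, rfl⟩ := Nat.exists_eq_add_of_le' hn
  obtain ⟨j, rfl⟩ := Nat.exists_eq_add_of_le' hk
  simp only [Nat.add_sub_cancel, Nat.add_succ_sub_one, Nat.choose_succ_succ', add_assoc,
    Nat.reduceAdd]
  omega

section BernoulliWeight

variable {α R : Type*} [CommRing R]

/-- The probability that the `p`-random subset of `s` is `t`, for `t ⊆ s`. -/
def bernoulliWeight (p : R) (s t : Finset α) : R :=
  p ^ #t * (1 - p) ^ (#s - #t)

lemma sum_powersetCard_bernoulliWeight (p : R) (s t : Finset α) (r : ℕ) :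
    ∑ u ∈ s.powersetCard r, bernoulliWeight p t u =
      (#s).choose r * p ^ r * (1 - p) ^ (#t - r) := by
  rw [sum_congr rfl fun u hu => by rw [bernoulliWeight, (mem_powersetCard.mp hu).2],
    sum_const, card_powersetCard, nsmul_eq_mul, mul_assoc]

variable [DecidableEq α]

lemma bernoulliWeight_insert_of_notMem {p : R} {s t : Finset α} {a : α}
    (ha : a ∉ s) (hts : t ⊆ s) :
    bernoulliWeight p (insert a s) t = (1 - p) * bernoulliWeight p s t := by
  have : #s + 1 - #t = #s - #t + 1 := by have := card_le_card hts; omega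
  rw [bernoulliWeight, bernoulliWeight, card_insert_of_notMem ha, this, pow_succ]
  ring

lemma bernoulliWeight_insert_insert {p : R} {s t : Finset α} {a : α}
    (ha : a ∉ s) (hts : t ⊆ s) :
    bernoulliWeight p (insert a s) (insert a t) = p * bernoulliWeight p s t := by
  rw [bernoulliWeight, bernoulliWeight, card_insert_of_notMem ha,
    card_insert_of_notMem (notMem_mono hts ha), Nat.add_sub_add_right, pow_succ]
  ring

/-- The marginal of the `p`-random subset of `s` on `t ⊆ s` is the `p`-random subset of `t`. -/
lemma sum_powerset_bernoulliWeight_mul_inter (p : R) {s t : Finset α} (hts : t ⊆ s)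
    (f : Finset α → R) :
    ∑ u ∈ s.powerset, bernoulliWeight p s u * f (u ∩ t) =
      ∑ u ∈ t.powerset, bernoulliWeight p t u * f u := by
  obtain ⟨d, hd, rfl⟩ : ∃ d, Disjoint t d ∧ s = t ∪ d :=
    ⟨s \ t, disjoint_sdiff, (union_sdiff_of_subset hts).symm⟩
  clear hts
  induction d using Finset.induction_on with
  | empty =>
    refine sum_congr (by rw [union_empty]) fun u hu => ?_
    rw [union_empty, inter_eq_left.mpr (mem_powerset.mp hu)]
  | insert a d had ih =>
    rw [disjoint_insert_right] at hd
    have ha : a ∉ t ∪ d := by simp [hd.1, had]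
    rw [union_insert, sum_powerset_insert ha, ← ih hd.2, ← sum_add_distrib]
    refine sum_congr rfl fun u hu => ?_
    have hu := mem_powerset.mp hu
    rw [bernoulliWeight_insert_of_notMem ha hu, bernoulliWeight_insert_insert ha hu,
      insert_inter_of_notMem hd.1]
    ring

end BernoulliWeight

section StarCollision

variable {n : ℕ}

lemma hexp_eq_sum_powerset (k : ℕ) (p : ℝ) (f : Finset (Finset (Fin n)) → ℝ) :
    hexp n k p f = ∑ E ∈ (kSets n k).powerset, bernoulliWeight p (kSets n k) E * f E := by
  rw [hexp, ← sum_subset (subset_univ _) fun E _ hE => by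
    rw [hweight, if_neg (mt mem_powerset.mpr hE), zero_mul]]
  exact sum_congr rfl fun E hE => by rw [hweight, if_pos (mem_powerset.mp hE)]; rfl

lemma hexp_sum {ι : Type*} (s : Finset ι) (k : ℕ) (p : ℝ)
    (f : ι → Finset (Finset (Fin n)) → ℝ) :
    hexp n k p (fun E => ∑ i ∈ s, f i E) = ∑ i ∈ s, hexp n k p (f i) := by
  simp only [hexp, mul_sum]
  exact sum_comm

lemma hstar_eq_filter_not_disjoint {E : Finset (Finset (Fin n))} {P : Finset (Fin n)} {u : Fin n}
    (hE : ∀ e ∈ E, ¬Disjoint P e → P ⊆ e) (hu : u ∈ P) :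
    hstar E u = E.filter (¬Disjoint P ·) := by
  ext e
  simp only [hstar, mem_filter, and_congr_right_iff]
  exact fun he => ⟨fun hue => not_disjoint_iff.mpr ⟨u, hu, hue⟩, fun h => hE e he h hu⟩

lemma subset_of_hstar_eq {E : Finset (Finset (Fin n))} {P : Finset (Fin n)}
    (hP : ∀ u ∈ P, ∀ v ∈ P, hstar E u = hstar E v) {e : Finset (Fin n)} (he : e ∈ E)
    (heP : ¬Disjoint P e) : P ⊆ e := by
  obtain ⟨u, hu, hue⟩ := not_disjoint_iff.mp heP
  intro v hv
  have : e ∈ hstar E v := hP u hu v hv ▸ mem_filter.mpr ⟨he, hue⟩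
  exact (mem_filter.mp this).2

lemma hstar_collision_iff {E : Finset (Finset (Fin n))} {P : Finset (Fin n)} (hP : P.Nonempty)
    (r : ℕ) :
    ((∀ u ∈ P, ∀ v ∈ P, hstar E u = hstar E v) ∧ ∀ u ∈ P, #(hstar E u) = r) ↔
      (∀ e ∈ E, ¬Disjoint P e → P ⊆ e) ∧ #(E.filter (¬Disjoint P ·)) = r := by
  obtain ⟨w, hw⟩ := hP
  constructor
  · rintro ⟨hstars, hcard⟩
    have hE := fun e => subset_of_hstar_eq hstars (e := e)
    exact ⟨hE, hstar_eq_filter_not_disjoint hE hw ▸ hcard w hw⟩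
  · rintro ⟨hE, hcard⟩
    refine ⟨fun u hu v hv => ?_, fun u hu => ?_⟩
    · rw [hstar_eq_filter_not_disjoint hE hu, hstar_eq_filter_not_disjoint hE hv]
    · rwa [hstar_eq_filter_not_disjoint hE hu]

lemma card_kSets_filter_superset {k : ℕ} {P : Finset (Fin n)} (hPk : #P ≤ k) :
    #((kSets n k).filter (P ⊆ ·)) = (n - #P).choose (k - #P) := by
  rw [kSets, card_filter_powersetCard_subset _ _ _ (subset_univ P) hPk, card_univ,
    Fintype.card_fin]

lemma card_kSets_filter_not_disjoint (k : ℕ) (P : Finset (Fin n)) :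
    #((kSets n k).filter (¬Disjoint P ·)) = n.choose k - (n - #P).choose k := by
  have hdisj : (kSets n k).filter (Disjoint P ·) = Pᶜ.powersetCard k := by
    ext e
    simp [kSets, mem_powersetCard, subset_compl_iff_disjoint_left, and_comm]
  rw [filter_not, card_sdiff_of_subset (filter_subset _ _), hdisj, card_powersetCard,
    card_compl, Fintype.card_fin, kSets, card_powersetCard, card_univ, Fintype.card_fin]

/-- The event only depends on the edges meeting `P`: they must form an `r`-subset of the edges
containing `P`. -/
lemma hexp_hstar_collision (k r : ℕ) (p : ℝ) {P : Finset (Fin n)} (hP : P.Nonempty)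
    (hPk : #P ≤ k) :
    hexp n k p (fun E => if (∀ u ∈ P, ∀ v ∈ P, hstar E u = hstar E v) ∧
        ∀ u ∈ P, #(hstar E u) = r then 1 else 0) =
      ((n - #P).choose (k - #P)).choose r * p ^ r *
        (1 - p) ^ (n.choose k - (n - #P).choose k - r) := by
  set T := (kSets n k).filter (¬Disjoint P ·)
  set A := (kSets n k).filter (P ⊆ ·)
  have hAT : A ⊆ T := monotone_filter_right _ fun e _ hPe =>
    not_disjoint_iff.mpr ⟨hP.choose, hP.choose_spec, hPe hP.choose_spec⟩
  have hevent : ∀ E ∈ (kSets n k).powerset,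
      ((∀ u ∈ P, ∀ v ∈ P, hstar E u = hstar E v) ∧ ∀ u ∈ P, #(hstar E u) = r) ↔
        E ∩ T ∈ A.powersetCard r := by
    intro E hE
    have hET : E ∩ T = E.filter (¬Disjoint P ·) := by
      rw [inter_filter, inter_eq_left.mpr (mem_powerset.mp hE)]
    rw [hstar_collision_iff hP, mem_powersetCard, hET, and_congr_left_iff]
    refine fun _ => ⟨fun h e he => ?_, fun h e he heP => ?_⟩
    · obtain ⟨heE, heP⟩ := mem_filter.mp he
      exact mem_filter.mpr ⟨mem_powerset.mp hE heE, h e heE heP⟩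
    · exact (mem_filter.mp (h (mem_filter.mpr ⟨he, heP⟩))).2
  rw [hexp_eq_sum_powerset, sum_congr rfl fun E hE => by rw [if_congr (hevent E hE) rfl rfl],
    sum_powerset_bernoulliWeight_mul_inter p (filter_subset _ _)
      (fun S => if S ∈ A.powersetCard r then 1 else 0)]
  simp only [mul_ite, mul_one, mul_zero]
  rw [sum_ite_mem,
    inter_eq_right.mpr fun S hS => mem_powerset.mpr ((mem_powersetCard.mp hS).1.trans hAT),
    sum_powersetCard_bernoulliWeight, card_kSets_filter_superset hPk,
    card_kSets_filter_not_disjoint]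

end StarCollision

theorem stmt9_general (n k r : ℕ) (hk : 2 ≤ k)
    (p : ℝ) :
    hexp n k p (fun E => (Xr n r E : ℝ))
      = (n.choose 2 : ℝ) * (((n - 2).choose (k - 2)).choose r : ℝ) * p ^ r *
        (1 - p) ^ (2 * (n - 2).choose (k - 1) + (n - 2).choose (k - 2) - r) := by
  have hpair : ∀ P ∈ (univ : Finset (Fin n)).powersetCard 2,
      hexp n k p (fun E => if (∀ u ∈ P, ∀ v ∈ P, hstar E u = hstar E v) ∧
        ∀ u ∈ P, #(hstar E u) = r then 1 else 0) =
      (((n - 2).choose (k - 2)).choose r : ℝ) * p ^ r *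
        (1 - p) ^ (2 * (n - 2).choose (k - 1) + (n - 2).choose (k - 2) - r) := by
    intro P hP
    have hP2 := (mem_powersetCard.mp hP).2
    have hn : 2 ≤ n := hP2 ▸ card_le_univ P |>.trans_eq (Fintype.card_fin n)
    rw [hexp_hstar_collision k r p (card_pos.mp (by omega)) (by omega), hP2,
      Nat.choose_sub_choose_sub_two hn hk]
  simp only [Xr, natCast_card_filter]
  rw [hexp_sum, sum_congr rfl hpair, sum_const, card_powersetCard, card_univ, Fintype.card_fin,
    nsmul_eq_mul, mul_assoc, mul_assoc, mul_assoc]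

/-- In `H(n,k,p)`, the expected number of star-collisions of support size `r` equals
`C(n,2) C(C(n-2,k-2), r) p^r (1-p)^{2 C(n-2,k-1) + C(n-2,k-2) - r}`. -/
theorem stmt9 (n k r : ℕ) (hk : 2 ≤ k) (hkn : k ≤ n)
    (hr : r ≤ (n - 2).choose (k - 2))
    (p : ℝ) (hp0 : 0 < p) (hp1 : p < 1) :
    hexp n k p (fun E => (Xr n r E : ℝ))
      = (n.choose 2 : ℝ) * (((n - 2).choose (k - 2)).choose r : ℝ) * p ^ r *
        (1 - p) ^ (2 * (n - 2).choose (k - 1) + (n - 2).choose (k - 2) - r) :=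
  stmt9_general n k r hk p
end

section
/- In H(n,k,p_n) with λ_n = log n + c for fixed c ∈ ℝ, the expected number of degenerate star-collisions X_0 (pairs of isolated vertices) converges to (1/2)·e^{−2c} as n → ∞. -/
section AuxProof
open Finset Filter Real

lemma sum_subset_weight {α : Type*} [Fintype α] [DecidableEq α] (p : ℝ) (A : Finset α) (N : ℕ)
    (hA : A.card ≤ N) :
    ∑ E : Finset α, (if E ⊆ A then p ^ E.card * (1 - p) ^ (N - E.card) else 0)
      = (1 - p) ^ (N - A.card) := by
  classical
  have h1 : ∑ E : Finset α, (if E ⊆ A then p ^ E.card * (1 - p) ^ (N - E.card) else 0)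
      = ∑ E ∈ A.powerset, p ^ E.card * (1 - p) ^ (N - E.card) := by
    rw [← Finset.sum_filter]
    apply Finset.sum_congr
    · ext E; simp [Finset.mem_powerset]
    · intros; rfl
  rw [h1]
  have h2 : ∀ E ∈ A.powerset, p ^ E.card * (1 - p) ^ (N - E.card)
      = (p ^ E.card * (1 - p) ^ (A.card - E.card)) * (1 - p) ^ (N - A.card) := by
    intro E hE
    have hEA : E.card ≤ A.card := Finset.card_le_card (Finset.mem_powerset.mp hE)
    rw [mul_assoc, ← pow_add]
    congr 2
    omega
  rw [Finset.sum_congr rfl h2, ← Finset.sum_mul]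
  have h3 : ∑ E ∈ A.powerset, p ^ E.card * (1 - p) ^ (A.card - E.card) = 1 := by
    have := Finset.prod_add (fun _ : α => p) (fun _ : α => 1 - p) A
    simp only [Finset.prod_const] at this
    have h4 : ∑ t ∈ A.powerset, p ^ t.card * (1 - p) ^ (A \ t).card
        = ∑ t ∈ A.powerset, p ^ t.card * (1 - p) ^ (A.card - t.card) := by
      apply Finset.sum_congr rfl
      intro t ht
      rw [Finset.card_sdiff_of_subset (Finset.mem_powerset.mp ht)]
    rw [h4] at this
    rw [← this]
    norm_num
  rw [h3, one_mul]


lemma choose_lower (j : ℕ) (hj : 1 ≤ j) : ∀ m : ℕ, 2 * j ≤ m → m ≤ m.choose j := by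
  induction j with
  | zero => omega
  | succ i ih =>
    intro m hm
    rcases Nat.eq_or_lt_of_le hj with h | h
    · have hi0 : i = 0 := by omega
      subst hi0
      simp [Nat.choose_one_right]
    · have hi : 1 ≤ i := by omega
      have h1 : m ≤ m.choose i := ih hi m (by omega)
      have h2 : m.choose i ≤ m.choose (i + 1) := by
        apply Nat.choose_le_succ_of_lt_half_left
        omega
      omega

lemma hL (i : ℕ) : Tendsto (fun x : ℝ => Real.log x ^ i / (x - 1)) atTop (nhds 0) := by
  have := Real.tendsto_pow_log_div_mul_add_atTop 1 (-1) i one_ne_zero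
  simpa [sub_eq_add_neg] using this

lemma L1 (c : ℝ) : Tendsto (fun x : ℝ => (Real.log x + c) / (x - 1)) atTop (nhds 0) := by
  have h := (hL 1).add ((hL 0).const_mul c)
  simp only [pow_one, pow_zero] at h
  rw [show (0:ℝ) + c * 0 = 0 by ring] at h
  refine h.congr (fun x => ?_)
  rw [add_div]
  ring

lemma L2 (c : ℝ) : Tendsto (fun x : ℝ => (Real.log x + c) ^ 2 / (x - 1)) atTop (nhds 0) := by
  have h := ((hL 2).add ((hL 1).const_mul (2 * c))).add ((hL 0).const_mul (c ^ 2))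
  rw [show (0:ℝ) + 2 * c * 0 + c ^ 2 * 0 = 0 by ring] at h
  refine h.congr (fun x => ?_)
  rw [show (Real.log x + c)^2 = Real.log x ^ 2 + 2 * c * Real.log x ^ 1 + c ^ 2 * Real.log x ^ 0 by
    simp; ring]
  rw [add_div, add_div]
  ring

lemma L1n (c : ℝ) : Tendsto (fun n : ℕ => (Real.log n + c) / ((n:ℝ) - 1)) atTop (nhds 0) :=
  (L1 c).comp tendsto_natCast_atTop_atTop

lemma L2n (c : ℝ) : Tendsto (fun n : ℕ => (Real.log n + c) ^ 2 / ((n:ℝ) - 1)) atTop (nhds 0) :=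
  (L2 c).comp tendsto_natCast_atTop_atTop


lemma Dbounds (A pp lm Mr ch C Bv : ℝ)
    (hA : 1 ≤ A) (rC : C * pp = lm) (rM : Mr + ch = 2 * C) (r3 : A * ch = C * Bv)
    (hMr0 : 0 ≤ Mr) (hch0 : 0 ≤ ch) (hpp0 : 0 < pp) (hph : pp ≤ 1/2)
    (hppub : pp ≤ lm / A) (hlm0 : 0 < lm) :
    -4 * lm ^ 2 / A ≤ Mr * Real.log (1 - pp) + 2 * lm ∧
      Mr * Real.log (1 - pp) + 2 * lm ≤ Bv * (lm / A) := by
  have hApos : (0:ℝ) < A := by linarith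
  have hq : 0 < 1 - pp := by linarith
  have hC0 : (0:ℝ) ≤ C := by nlinarith
  have hlog_ub : Real.log (1 - pp) ≤ -pp := by
    have := Real.log_le_sub_one_of_pos hq
    linarith
  have hlog_lb : -pp - 2 * (pp * pp) ≤ Real.log (1 - pp) := by
    have h1 := Real.log_le_sub_one_of_pos (inv_pos.mpr hq)
    rw [Real.log_inv] at h1
    have h2 : 1 - (1 - pp)⁻¹ ≤ Real.log (1 - pp) := by linarith
    have hqinv : (1 - pp) * (1 - pp)⁻¹ = 1 := mul_inv_cancel₀ hq.ne'
    nlinarith [sq_nonneg pp]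
  have haux : ch * pp = Bv * (lm / A) := by
    rw [mul_div_assoc', eq_div_iff hApos.ne']
    linear_combination pp * r3 + Bv * rC
  have hppA : pp * A ≤ lm := by
    have := (le_div_iff₀ hApos).mp hppub
    linarith
  have hMp : Mr * pp ≤ 2 * lm := by
    have h1 : Mr ≤ 2 * C := by linarith
    nlinarith [mul_le_mul_of_nonneg_right h1 hpp0.le]
  constructor
  · have h3 : Mr * (-pp - 2 * (pp * pp)) ≤ Mr * Real.log (1 - pp) :=
      mul_le_mul_of_nonneg_left hlog_lb hMr0
    have h4 : 0 ≤ 2 * lm - Mr * pp := by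
      have h7 : (2 * C - Mr) * pp = ch * pp := by linear_combination (-pp) * rM
      nlinarith [mul_nonneg hch0 hpp0.le]
    have h5 : Mr * (pp * pp) ≤ 2 * lm * (lm / A) := by
      have h51 : Mr * pp * pp ≤ 2 * lm * pp := mul_le_mul_of_nonneg_right hMp hpp0.le
      have h52 : 2 * lm * pp ≤ 2 * lm * (lm / A) :=
        mul_le_mul_of_nonneg_left (by rw [le_div_iff₀ hApos]; linarith) (by linarith)
      nlinarith
    have heq : -4 * lm ^ 2 / A = -2 * (2 * lm * (lm / A)) := by ring
    rw [heq]
    nlinarith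
  · have h6 : Mr * Real.log (1 - pp) ≤ Mr * (-pp) := mul_le_mul_of_nonneg_left hlog_ub hMr0
    have h7 : (2 * C - Mr) * pp = ch * pp := by linear_combination (-pp) * rM
    nlinarith

lemma tendsto_main (b : ℕ) (c : ℝ) (p : ℕ → ℝ)
    (hp : ∀ᶠ n in atTop, 0 ≤ p n ∧ p n ≤ 1)
    (hlam : ∀ᶠ n in atTop, ((n - 1).choose (b + 2 - 1) : ℝ) * p n = Real.log n + c) :
    Tendsto (fun n => (n.choose 2 : ℝ) * (1 - p n) ^ (n.choose (b+2) - (n - 2).choose (b+2)))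
      atTop (nhds ((1 / 2) * Real.exp (-2 * c))) := by
  have hlogtop : Tendsto (fun n : ℕ => Real.log n + c) atTop atTop :=
    tendsto_atTop_add_const_right _ c (Real.tendsto_log_atTop.comp tendsto_natCast_atTop_atTop)
  have hlampos : ∀ᶠ n : ℕ in atTop, 0 < Real.log n + c := hlogtop.eventually_gt_atTop 0
  -- bounds on p
  have hpb : ∀ᶠ n in atTop, 0 < p n ∧ p n ≤ (Real.log n + c) / ((n:ℝ) - 1) := by
    filter_upwards [hp, hlam, hlampos, eventually_ge_atTop (2 * (b+2) + 2)] with n hp1 hC hl hn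
    have hCge : (n - 1 : ℕ) ≤ (n-1).choose (b+2-1) := choose_lower (b+2-1) (by omega) (n-1) (by omega)
    have hCcast : (n:ℝ) - 1 ≤ ((n-1).choose (b+2-1) : ℝ) := by
      calc (n:ℝ) - 1 = ((n - 1 : ℕ) : ℝ) := by rw [Nat.cast_sub (by omega)]; norm_num
        _ ≤ _ := by exact_mod_cast hCge
    have hn1 : (0:ℝ) < (n:ℝ) - 1 := by
      have : (2:ℝ) ≤ (n:ℝ) := by exact_mod_cast (by omega : 2 ≤ n)
      linarith
    have hCpos : (0:ℝ) < ((n-1).choose (b+2-1) : ℝ) := by linarith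
    constructor
    · by_contra h
      push_neg at h
      have : ((n-1).choose (b+2-1) : ℝ) * p n ≤ 0 := mul_nonpos_of_nonneg_of_nonpos hCpos.le h
      linarith
    · rw [le_div_iff₀ hn1, ← hC]
      nlinarith [mul_le_mul_of_nonneg_left hCcast hp1.1]
  have hp0 : Tendsto p atTop (nhds 0) := by
    apply tendsto_of_tendsto_of_tendsto_of_le_of_le' tendsto_const_nhds (L1n c)
    · filter_upwards [hp] with n h using h.1
    · filter_upwards [hpb] with n h using h.2
  have hphalf : ∀ᶠ n in atTop, p n ≤ 1/2 :=
    hp0.eventually (eventually_le_nhds (by norm_num))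
  -- bounds on the correction term D
  have hD : ∀ᶠ n : ℕ in atTop,
      -4 * (Real.log n + c) ^ 2 / ((n:ℝ) - 1)
          ≤ ((n.choose (b+2) - (n-2).choose (b+2) : ℕ) : ℝ) * Real.log (1 - p n)
            + 2 * (Real.log n + c) ∧
        ((n.choose (b+2) - (n-2).choose (b+2) : ℕ) : ℝ) * Real.log (1 - p n)
            + 2 * (Real.log n + c) ≤ ((b:ℝ) + 1) * ((Real.log n + c) / ((n:ℝ) - 1)) := by
    filter_upwards [hlam, hlampos, hpb, hphalf, eventually_ge_atTop (2 * (b+2) + 2)]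
      with n hCl hl hpbn hph hn
    obtain ⟨a, rfl⟩ : ∃ a, n = a + 2 := ⟨n - 2, by omega⟩
    have e1 : (a+2).choose (b+2) = (a+1).choose (b+1) + (a+1).choose (b+2) :=
      Nat.choose_succ_succ _ _
    have e2 : (a+1).choose (b+2) = a.choose (b+1) + a.choose (b+2) := Nat.choose_succ_succ _ _
    have e3 : (a+1).choose (b+1) = a.choose b + a.choose (b+1) := Nat.choose_succ_succ _ _
    have hM2 : ((a+2).choose (b+2) - a.choose (b+2)) + a.choose b = 2 * (a+1).choose (b+1) := by
      omega
    have hM3 : (a+1) * a.choose b = (a+1).choose (b+1) * (b+1) := Nat.add_one_mul_choose_eq a b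
    have hcast1 : ((a + 2 : ℕ):ℝ) - 1 = (a:ℝ) + 1 := by push_cast; ring
    have hsub : (a + 2) - 2 = a := by omega
    have rC : (((a+1).choose (b+1) : ℕ) : ℝ) * p (a+2) = Real.log ((a+2 : ℕ):ℝ) + c := by
      have : ((a + 2 - 1).choose (b + 2 - 1) : ℝ) * p (a+2) = Real.log ((a+2:ℕ):ℝ) + c := hCl
      simpa using this
    have rM : (((a+2).choose (b+2) - a.choose (b+2) : ℕ) : ℝ) + (a.choose b : ℝ)
        = 2 * ((a+1).choose (b+1) : ℝ) := by exact_mod_cast hM2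
    have r3 : ((a:ℝ) + 1) * (a.choose b : ℝ) = ((a+1).choose (b+1) : ℝ) * ((b:ℝ) + 1) := by
      exact_mod_cast hM3
    have hppub : p (a+2) ≤ (Real.log ((a+2:ℕ):ℝ) + c) / ((a:ℝ) + 1) := by
      have := hpbn.2; rwa [hcast1] at this
    have key := Dbounds ((a:ℝ) + 1) (p (a+2)) (Real.log ((a+2:ℕ):ℝ) + c)
      (((a+2).choose (b+2) - a.choose (b+2) : ℕ) : ℝ) (a.choose b : ℝ)
      ((a+1).choose (b+1) : ℝ) ((b:ℝ) + 1)
      (by have := Nat.cast_nonneg (α := ℝ) a; linarith)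
      rC rM r3 (by positivity) (by positivity) hpbn.1 hph hppub hl
    rw [hsub, hcast1]
    exact key
  -- D → 0
  have hDlim : Tendsto (fun n : ℕ =>
      ((n.choose (b+2) - (n-2).choose (b+2) : ℕ) : ℝ) * Real.log (1 - p n)
        + 2 * (Real.log n + c)) atTop (nhds 0) := by
    apply tendsto_of_tendsto_of_tendsto_of_le_of_le'
      (g := fun n : ℕ => -4 * (Real.log n + c) ^ 2 / ((n:ℝ) - 1))
      (h := fun n : ℕ => ((b:ℝ) + 1) * ((Real.log n + c) / ((n:ℝ) - 1)))
    · have := (L2n c).const_mul (-4)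
      rw [mul_zero] at this
      exact this.congr (fun n => by ring)
    · have := (L1n c).const_mul ((b:ℝ) + 1)
      rw [mul_zero] at this
      exact this
    · filter_upwards [hD] with n h using h.1
    · filter_upwards [hD] with n h using h.2
  -- log(n-1) - log n → 0
  have hT1 : Tendsto (fun n : ℕ => Real.log ((n:ℝ) - 1) - Real.log n) atTop (nhds 0) := by
    have h1 : Tendsto (fun n : ℕ => ((n:ℝ) - 1) / n) atTop (nhds 1) := by
      have h0 := (tendsto_const_nhds (x := (1:ℝ)) (f := atTop (α := ℕ))).sub
        tendsto_one_div_atTop_nhds_zero_nat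
      rw [sub_zero] at h0
      refine h0.congr' ?_
      filter_upwards [eventually_ge_atTop 1] with n hn
      have hne : (n:ℝ) ≠ 0 := by positivity
      field_simp
    have h2 := (Real.continuousAt_log one_ne_zero).tendsto.comp h1
    rw [Real.log_one] at h2
    refine h2.congr' ?_
    filter_upwards [eventually_ge_atTop 2] with n hn
    have hn0 : (0:ℝ) < (n:ℝ) := by positivity
    have hn1 : (0:ℝ) < (n:ℝ) - 1 := by
      have : (2:ℝ) ≤ (n:ℝ) := by exact_mod_cast hn
      linarith
    simp only [Function.comp_apply]
    rw [Real.log_div hn1.ne' hn0.ne']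
  -- assemble
  have G : Tendsto (fun n : ℕ =>
      (-Real.log 2 - 2 * c) + ((Real.log ((n:ℝ) - 1) - Real.log n) +
        (((n.choose (b+2) - (n-2).choose (b+2) : ℕ) : ℝ) * Real.log (1 - p n)
          + 2 * (Real.log n + c)))) atTop
      (nhds ((-Real.log 2 - 2 * c) + (0 + 0))) :=
    tendsto_const_nhds.add (hT1.add hDlim)
  have Gexp := (Real.continuous_exp.tendsto _).comp G
  have hval : Real.exp ((-Real.log 2 - 2 * c) + (0 + 0)) = (1/2) * Real.exp (-2 * c) := by
    rw [add_zero, add_zero, sub_eq_add_neg, Real.exp_add, Real.exp_neg, Real.exp_log two_pos]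
    rw [show -(2*c) = -2*c by ring]
    ring
  rw [hval] at Gexp
  refine Gexp.congr' ?_
  filter_upwards [hphalf, eventually_ge_atTop 2] with n hph hn
  have hn0 : (0:ℝ) < (n:ℝ) := by
    have : (2:ℝ) ≤ (n:ℝ) := by exact_mod_cast hn
    linarith
  have hn1 : (0:ℝ) < (n:ℝ) - 1 := by
    have : (2:ℝ) ≤ (n:ℝ) := by exact_mod_cast hn
    linarith
  have hq : 0 < 1 - p n := by linarith
  simp only [Function.comp_apply]
  have hexpand : (-Real.log 2 - 2 * c) + ((Real.log ((n:ℝ) - 1) - Real.log n) +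
        (((n.choose (b+2) - (n-2).choose (b+2) : ℕ) : ℝ) * Real.log (1 - p n)
          + 2 * (Real.log n + c)))
      = (Real.log n + Real.log ((n:ℝ) - 1) - Real.log 2)
        + ((n.choose (b+2) - (n-2).choose (b+2) : ℕ) : ℝ) * Real.log (1 - p n) := by
    ring
  rw [hexpand, Real.exp_add]
  have hc2 : (n.choose 2 : ℝ) = (n:ℝ) * ((n:ℝ) - 1) / 2 := by rw [Nat.cast_choose_two]
  congr 1
  · rw [Real.exp_sub, Real.exp_add, Real.exp_log hn0, Real.exp_log hn1, Real.exp_log two_pos, hc2]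
  · rw [← Real.log_pow, Real.exp_log (pow_pos hq _)]


lemma hexp_X0 (n k : ℕ) (p : ℝ) :
    hexp n k p (fun E => (Xr n 0 E : ℝ))
      = (n.choose 2 : ℝ) * (1 - p) ^ (n.choose k - (n - 2).choose k) := by
  classical
  have hN : (kSets n k).card = n.choose k := by
    simp [kSets, Finset.card_powersetCard]
  -- rewrite Xr as a sum of indicators
  have hXr : ∀ E, (Xr n 0 E : ℝ) = ∑ P ∈ (Finset.univ : Finset (Fin n)).powersetCard 2,
      (if ((∀ u ∈ P, ∀ v ∈ P, hstar E u = hstar E v) ∧ ∀ u ∈ P, (hstar E u).card = 0)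
        then (1:ℝ) else 0) := by
    intro E
    rw [Xr, Finset.card_filter]
    push_cast
    rfl
  unfold hexp
  simp only [hXr, Finset.mul_sum]
  rw [Finset.sum_comm]
  have hterm : ∀ P ∈ (Finset.univ : Finset (Fin n)).powersetCard 2,
      ∑ E : Finset (Finset (Fin n)), hweight n k p E *
        (if ((∀ u ∈ P, ∀ v ∈ P, hstar E u = hstar E v) ∧ ∀ u ∈ P, (hstar E u).card = 0)
          then (1:ℝ) else 0)
      = (1 - p) ^ (n.choose k - (n-2).choose k) := by
    intro P hP
    obtain ⟨-, hPcard⟩ := Finset.mem_powersetCard.mp hP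
    set A : Finset (Finset (Fin n)) := ((Finset.univ : Finset (Fin n)) \ P).powersetCard k with hA
    have hAcard : A.card = (n - 2).choose k := by
      rw [hA, Finset.card_powersetCard, Finset.card_sdiff_of_subset (Finset.subset_univ P),
        Finset.card_univ, Fintype.card_fin, hPcard]
    have hAsub : A ⊆ kSets n k :=
      Finset.powersetCard_mono (Finset.sdiff_subset)
    have hAle : A.card ≤ (kSets n k).card := Finset.card_le_card hAsub
    have hkey : ∀ E : Finset (Finset (Fin n)),
        hweight n k p E *
          (if ((∀ u ∈ P, ∀ v ∈ P, hstar E u = hstar E v) ∧ ∀ u ∈ P, (hstar E u).card = 0)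
            then (1:ℝ) else 0)
        = (if E ⊆ A then p ^ E.card * (1 - p) ^ ((kSets n k).card - E.card) else 0) := by
      intro E
      have hiff : E ⊆ A ↔ (E ⊆ kSets n k ∧ ∀ u ∈ P, hstar E u = ∅) := by
        constructor
        · intro h
          constructor
          · exact h.trans hAsub
          · intro u hu
            rw [hstar, Finset.filter_eq_empty_iff]
            intro e he hue
            have := h he
            rw [hA, Finset.mem_powersetCard] at this
            have := this.1 hue
            simp at this
            exact this hu
        · rintro ⟨h1, h2⟩ e he
          rw [hA, Finset.mem_powersetCard]
          have := h1 he
          rw [kSets, Finset.mem_powersetCard] at this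
          refine ⟨?_, this.2⟩
          intro x hx
          simp only [Finset.mem_sdiff, Finset.mem_univ, true_and]
          intro hxP
          have := h2 x hxP
          rw [hstar, Finset.filter_eq_empty_iff] at this
          exact this he hx
      have hcond : ((∀ u ∈ P, ∀ v ∈ P, hstar E u = hstar E v) ∧ ∀ u ∈ P, (hstar E u).card = 0)
          ↔ ∀ u ∈ P, hstar E u = ∅ := by
        constructor
        · intro h u hu
          exact Finset.card_eq_zero.mp (h.2 u hu)
        · intro h
          exact ⟨fun u hu v hv => by rw [h u hu, h v hv], fun u hu => by rw [h u hu]; rfl⟩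
      by_cases hEA : E ⊆ A
      · have := hiff.mp hEA
        rw [if_pos hEA, hweight, if_pos this.1, if_pos (hcond.mpr this.2), mul_one]
      · rw [if_neg hEA]
        by_cases hc : ((∀ u ∈ P, ∀ v ∈ P, hstar E u = hstar E v) ∧ ∀ u ∈ P, (hstar E u).card = 0)
        · have hnk : ¬ E ⊆ kSets n k := fun h => hEA (hiff.mpr ⟨h, hcond.mp hc⟩)
          rw [if_pos hc, hweight, if_neg hnk, zero_mul]
        · rw [if_neg hc, mul_zero]
      
    rw [Finset.sum_congr rfl (fun E _ => hkey E), sum_subset_weight p A _ hAle, hAcard, hN]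
  rw [Finset.sum_congr rfl hterm, Finset.sum_const, nsmul_eq_mul]
  congr 1
  rw [Finset.card_powersetCard, Finset.card_univ, Fintype.card_fin]


end AuxProof

open Filter

/-- In `H(n,k,p_n)` with `λ_n = log n + c` for fixed `c ∈ ℝ`, the expected number of
degenerate star-collisions `X_0` converges to `(1/2) e^{-2c}`. -/
theorem stmt12 (k : ℕ) (hk : 2 ≤ k) (c : ℝ) (p : ℕ → ℝ)
    (hp : ∀ᶠ n in atTop, 0 ≤ p n ∧ p n ≤ 1)
    (hlam : ∀ᶠ n in atTop, ((n - 1).choose (k - 1) : ℝ) * p n = Real.log n + c) :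
    Tendsto (fun n => hexp n k (p n) (fun E => (Xr n 0 E : ℝ))) atTop
      (nhds ((1 / 2) * Real.exp (-2 * c))) := by
  obtain ⟨b, rfl⟩ : ∃ b, k = b + 2 := ⟨k - 2, by omega⟩
  exact (tendsto_main b c p hp hlam).congr (fun n => (hexp_X0 n (b + 2) (p n)).symm)
end

section
/- In H(n,k,p_n) with λ_n = C(n−1,k−1)p_n = log n + w(n) where w(n) → +∞, the probability that H_n has no isolated vertices (equivalently, no degenerate star-collisions) tends to 1. -/
/-! First moment method: a vertex is isolated exactly when none of the `C(n-1,k-1)` possible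
edges through it is present, which has probability `(1 - p)^C(n-1,k-1) ≤ exp (-λ)`. By the
union bound the probability of some isolated vertex is at most `n exp (-λ) = exp (-w) → 0`. -/

open Filter
open Finset

lemma sum_powerset_pow_mul_one_sub_pow {α R : Type*} [DecidableEq α] [CommRing R]
    {A S : Finset α} (hAS : A ⊆ S) (p : R) :
    ∑ E ∈ A.powerset, p ^ #E * (1 - p) ^ (#S - #E) = (1 - p) ^ (#S - #A) := by
  have hsplit : ∀ E ∈ A.powerset, p ^ #E * (1 - p) ^ (#S - #E)
      = (1 - p) ^ (#S - #A) * (p ^ #E * (1 - p) ^ (#A - #E)) := by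
    intro E hE
    have hEA := card_le_card (mem_powerset.mp hE)
    have hAS := card_le_card hAS
    rw [show #S - #E = (#S - #A) + (#A - #E) by omega, pow_add]
    ring
  rw [sum_congr rfl hsplit, ← mul_sum, sum_pow_mul_eq_add_pow, add_sub_cancel, one_pow, mul_one]

section RandomHypergraph

variable {n k : ℕ} {p : ℝ}

lemma hweight_nonneg (hp0 : 0 ≤ p) (hp1 : p ≤ 1) (E : Finset (Finset (Fin n))) :
    0 ≤ hweight n k p E := by
  unfold hweight
  split_ifs
  · exact mul_nonneg (pow_nonneg hp0 _) (pow_nonneg (sub_nonneg.mpr hp1) _)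
  · rfl

lemma hprob_disjoint (T : Finset (Finset (Fin n))) :
    hprob n k p (Disjoint · T) = (1 - p) ^ #(T ∩ kSets n k) := by
  set S := kSets n k
  have hcard : #S - #(S \ T) = #(T ∩ S) := by
    rw [card_sdiff]
    have := card_le_card (inter_subset_right : T ∩ S ⊆ S)
    omega
  rw [hprob, ← hcard, ← sum_powerset_pow_mul_one_sub_pow (sdiff_subset (t := T)),
    ← univ_inter (S \ T).powerset, ← sum_ite_mem]
  refine sum_congr rfl fun E _ => ?_
  unfold hweight
  simp only [mem_powerset, subset_sdiff]
  split_ifs <;> tauto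

lemma sum_hweight : ∑ E, hweight n k p E = 1 := by
  simpa [hprob] using hprob_disjoint (n := n) (k := k) (p := p) ∅

lemma hprob_not (A : Finset (Finset (Fin n)) → Prop) :
    hprob n k p (fun E => ¬ A E) = 1 - hprob n k p A := by
  classical
  rw [eq_sub_iff_add_eq, hprob, hprob, ← sum_add_distrib, ← sum_hweight (k := k) (p := p)]
  refine sum_congr rfl fun E _ => ?_
  by_cases h : A E <;> simp [h]

lemma hprob_le_one (hp0 : 0 ≤ p) (hp1 : p ≤ 1) (A : Finset (Finset (Fin n)) → Prop) :
    hprob n k p A ≤ 1 := by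
  rw [hprob, ← sum_hweight]
  refine sum_le_sum fun E _ => ?_
  split_ifs
  · rfl
  · exact hweight_nonneg hp0 hp1 E

lemma hprob_exists_le_sum {ι : Type*} [Fintype ι] (hp0 : 0 ≤ p) (hp1 : p ≤ 1)
    (B : ι → Finset (Finset (Fin n)) → Prop) :
    hprob n k p (fun E => ∃ i, B i E) ≤ ∑ i, hprob n k p (B i) := by
  classical
  have hterm_nonneg : ∀ i E, 0 ≤ if B i E then hweight n k p E else 0 := fun i E => by
    split_ifs
    · exact hweight_nonneg hp0 hp1 E
    · rfl
  simp only [hprob]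
  rw [sum_comm]
  refine sum_le_sum fun E _ => ?_
  split_ifs with h
  · obtain ⟨i, hi⟩ := h
    calc hweight n k p E = if B i E then hweight n k p E else 0 := (if_pos hi).symm
      _ ≤ _ := single_le_sum (fun j _ => hterm_nonneg j E) (mem_univ i)
  · exact sum_nonneg fun i _ => hterm_nonneg i E

lemma hstar_eq_empty_iff (E : Finset (Finset (Fin n))) (v : Fin n) :
    hstar E v = ∅ ↔ Disjoint E (univ.filter (v ∈ ·)) := by
  simp [hstar, filter_eq_empty_iff, disjoint_left]

lemma card_filter_mem_inter_kSets (hk : 1 ≤ k) (v : Fin n) :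
    #(univ.filter (v ∈ ·) ∩ kSets n k) = (n - 1).choose (k - 1) := by
  have h : univ.filter (v ∈ ·) ∩ kSets n k = (univ.powersetCard k).filter ({v} ⊆ ·) := by
    ext e
    simp [kSets, and_comm]
  rw [h, card_filter_powersetCard_subset _ _ _ (subset_univ _) (by simpa using hk)]
  simp

lemma hprob_hstar_eq_empty (hk : 1 ≤ k) (v : Fin n) :
    hprob n k p (hstar · v = ∅) = (1 - p) ^ (n - 1).choose (k - 1) := by
  simp_rw [hstar_eq_empty_iff]
  rw [hprob_disjoint, card_filter_mem_inter_kSets hk]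

lemma hprob_exists_isolated_le (hk : 1 ≤ k) (hp0 : 0 ≤ p) (hp1 : p ≤ 1) :
    hprob n k p (fun E => ∃ v, hstar E v = ∅)
      ≤ n * Real.exp (-((n - 1).choose (k - 1) * p)) := by
  set m := (n - 1).choose (k - 1)
  calc hprob n k p (fun E => ∃ v, hstar E v = ∅)
      ≤ ∑ v : Fin n, hprob n k p (hstar · v = ∅) := hprob_exists_le_sum hp0 hp1 _
    _ = n * (1 - p) ^ m := by simp [hprob_hstar_eq_empty hk, m]
    _ ≤ n * Real.exp (-p) ^ m := by
        gcongr
        linarith [Real.add_one_le_exp (-p)]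
    _ = n * Real.exp (-(m * p)) := by rw [← Real.exp_nat_mul, mul_neg]

end RandomHypergraph

lemma natCast_mul_exp_neg_log_add {n : ℕ} (hn : 0 < n) (x : ℝ) :
    n * Real.exp (-(Real.log n + x)) = Real.exp (-x) := by
  have hn' : (0 : ℝ) < n := by exact_mod_cast hn
  rw [neg_add, Real.exp_add, Real.exp_neg (Real.log n), Real.exp_log hn',
    mul_inv_cancel_left₀ hn'.ne']

/-- In `H(n,k,p_n)` with `λ_n = log n + w(n)`, `w(n) → ∞`, the probability that there is
no isolated vertex (equivalently, no degenerate star-collision) tends to `1`. -/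
theorem stmt14 (k : ℕ) (hk : 2 ≤ k) (w : ℕ → ℝ) (hw : Tendsto w atTop atTop)
    (p : ℕ → ℝ) (hp : ∀ᶠ n in atTop, 0 ≤ p n ∧ p n ≤ 1)
    (hlam : ∀ᶠ n in atTop, ((n - 1).choose (k - 1) : ℝ) * p n = Real.log n + w n) :
    Tendsto (fun n => hprob n k (p n) (fun E => ∀ v : Fin n, hstar E v ≠ ∅))
      atTop (nhds 1) := by
  have hlower : Tendsto (fun n => 1 - Real.exp (-w n)) atTop (nhds 1) := by
    simpa using tendsto_const_nhds.sub
      (Real.tendsto_exp_atBot.comp (tendsto_neg_atTop_atBot.comp hw))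
  refine tendsto_of_tendsto_of_tendsto_of_le_of_le' hlower tendsto_const_nhds ?_ ?_
  · filter_upwards [hp, hlam, eventually_gt_atTop 0] with n ⟨hp0, hp1⟩ hlamn hn
    have hfirst := hprob_exists_isolated_le (n := n) (k := k) (by omega) hp0 hp1
    rw [hlamn, natCast_mul_exp_neg_log_add hn] at hfirst
    simp only [ne_eq, ← not_exists]
    rw [hprob_not]
    linarith
  · filter_upwards [hp] with n ⟨hp0, hp1⟩
    exact hprob_le_one hp0 hp1 _
end
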